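/- For integers 1 ≤ i < j, p_i(x)·q_j(x) − q_i(x)·p_j(x) = (−1)^{i-1} · x^i · p_{j−i−1}(x), where p_k and q_k are the matching generating polynomials of the path and cycle on k vertices respectively. -/
import Mathlib


open Polynomial

/-- Matching generating polynomial of the path on `k` vertices, via its recurrence. -/
noncomputable def ppoly : ℕ → Polynomial ℚ
  | 0 => 1
  | 1 => 1
  | (k+2) => ppoly (k+1) + Polynomial.X * ppoly k

/-- Extension of `ppoly` to integer indices, with `p_{-1} = 0` (and `0` below that). -/
noncomputable def pz (k : ℤ) : Polynomial ℚ := if 0 ≤ k then ppoly k.toNat else 0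


/-- Matching generating polynomial of the `k`-cycle: `q_k = p_k + x p_{k-2}` for `k ≥ 2`,
with the conventions `q_0 = 2`, `q_1 = 1`. -/
noncomputable def qq (k : ℕ) : Polynomial ℚ :=
  if k = 0 then 2 else if k = 1 then 1 else ppoly k + Polynomial.X * ppoly (k - 2)

lemma ppoly_rec (k : ℕ) : ppoly (k+2) = ppoly (k+1) + Polynomial.X * ppoly k := by
  rw [ppoly]

lemma ppoly_key (m : ℕ) : ∀ a : ℕ,
    ppoly (a+1) * ppoly (a+m+1) - ppoly a * ppoly (a+m+2) =
      (-1)^(a+1) * Polynomial.X^(a+1) * ppoly m := by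
  intro a
  induction a with
  | zero =>
      have h1 : ppoly (m+2) = ppoly (m+1) + Polynomial.X * ppoly m := ppoly_rec m
      simp only [zero_add, ppoly]
      ring
  | succ a ih =>
      have h1 : ppoly (a+2) = ppoly (a+1) + Polynomial.X * ppoly a := ppoly_rec a
      have h2 : ppoly (a+m+3) = ppoly (a+m+2) + Polynomial.X * ppoly (a+m+1) :=
        ppoly_rec (a+m+1)
      rw [show a+1+1 = a+2 by ring, show a+1+m+1 = a+m+2 by ring,
        show a+1+m+2 = a+m+3 by ring, h1, h2]
      linear_combination (-Polynomial.X) * ih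

/-- For integers `1 ≤ i < j`:
`p_i q_j − q_i p_j = (−1)^{i-1} x^i p_{j−i−1}`. -/
theorem ppoly_qq_identity (i j : ℕ) (h1 : 1 ≤ i) (h2 : i < j) :
    ppoly i * qq j - qq i * ppoly j =
      (-1) ^ (i + 1) * Polynomial.X ^ i * ppoly (j - i - 1) := by
  rcases i with _ | _ | a
  · omega
  · -- i = 1, j ≥ 2, write j = m+2
    obtain ⟨m, rfl⟩ : ∃ m, j = m + 2 := ⟨j - 2, by omega⟩
    simp only [qq, show m + 2 ≠ 0 by omega, show m + 2 ≠ 1 by omega, if_false,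
      Nat.add_sub_cancel, show m + 2 - 1 - 1 = m by omega, eq_self_iff_true,
      if_true, Nat.one_ne_zero, reduceIte]
    norm_num
    simp only [ppoly]
    ring
  · -- i = a + 2, write j = a + m + 3
    obtain ⟨m, rfl⟩ : ∃ m, j = a + m + 3 := ⟨j - a - 3, by omega⟩
    simp only [qq, show a + 2 ≠ 0 by omega, show a + 2 ≠ 1 by omega,
      show a + m + 3 ≠ 0 by omega, show a + m + 3 ≠ 1 by omega, if_false,
      show a + 2 - 2 = a by omega, show a + m + 3 - 2 = a + m + 1 by omega,
      show a + m + 3 - (a + 2) - 1 = m by omega]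
    have key := ppoly_key m a
    have hp1 : ppoly (a+2) = ppoly (a+1) + Polynomial.X * ppoly a := ppoly_rec a
    have hp2 : ppoly (a+m+3) = ppoly (a+m+2) + Polynomial.X * ppoly (a+m+1) :=
      ppoly_rec (a+m+1)
    rw [hp1, hp2]
    linear_combination Polynomial.X * key
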